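/- arXiv:1310.6813 — 2 statements merged into one kernel-verified Lean document; each statement's English description precedes it below -/
import Mathlib

section
/- Let C, D ∈ Clifford(n) be such that C P C⁻¹ = D P D⁻¹ for every P ∈ Pauli(n). Then C and D differ only by a global phase that is a power of ω, i.e., C = ωᶦ·D for some integer i with 0 ≤ i < 8, where ω = e^{iπ/4}. -/
open scoped Matrix Kronecker

noncomputable section

def PX : Matrix (Fin 2) (Fin 2) ℂ := !![0, 1; 1, 0]
def PY : Matrix (Fin 2) (Fin 2) ℂ := !![0, -Complex.I; Complex.I, 0]
def PZ : Matrix (Fin 2) (Fin 2) ℂ := !![1, 0; 0, -1]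
def gH : Matrix (Fin 2) (Fin 2) ℂ := (Real.sqrt 2 : ℂ)⁻¹ • !![1, 1; 1, -1]
def gS : Matrix (Fin 2) (Fin 2) ℂ := !![1, 0; 0, Complex.I]
def gCZ : Matrix (Fin 4) (Fin 4) ℂ :=
  !![1,0,0,0; 0,1,0,0; 0,0,1,0; 0,0,0,-1]
def ω : ℂ := Complex.exp (Complex.I * Real.pi / 4)

/-- Kronecker product of square matrices, with index types flattened to `Fin (m * k)`. -/
def kron' {m k : ℕ} (A : Matrix (Fin m) (Fin m) ℂ) (B : Matrix (Fin k) (Fin k) ℂ) :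
    Matrix (Fin (m * k)) (Fin (m * k)) ℂ :=
  Matrix.reindex finProdFinEquiv finProdFinEquiv (A ⊗ₖ B)

/-- `n`-fold tensor product `P 0 ⊗ P 1 ⊗ ⋯ ⊗ P (n-1)` of 2×2 matrices. -/
def tensorPow : (n : ℕ) → (Fin n → Matrix (Fin 2) (Fin 2) ℂ) →
    Matrix (Fin (2 ^ n)) (Fin (2 ^ n)) ℂ
  | 0, _ => 1
  | n + 1, P =>
      Matrix.reindex (finCongr (pow_succ' 2 n).symm) (finCongr (pow_succ' 2 n).symm)
        (kron' (P 0) (tensorPow n fun i => P i.succ))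

/-- The set of n-qubit Pauli operators: λ • P₁ ⊗ ⋯ ⊗ Pₙ with λ ∈ {1,-1,i,-i},
    Pⱼ ∈ {I, X, Y, Z}. -/
def PauliSet (n : ℕ) : Set (Matrix (Fin (2 ^ n)) (Fin (2 ^ n)) ℂ) :=
  {M | ∃ (lam : ℂ) (P : Fin n → Matrix (Fin 2) (Fin 2) ℂ),
    lam ∈ ({1, -1, Complex.I, -Complex.I} : Set ℂ) ∧
    (∀ i, P i ∈ ({1, PX, PY, PZ} : Set (Matrix (Fin 2) (Fin 2) ℂ))) ∧
    M = lam • tensorPow n P}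

/-- `I_{2^a} ⊗ G ⊗ I_{2^b}`, where `G` acts on `c` qubits and `a + c + b = n`. -/
def embed (a c b n : ℕ) (h : a + c + b = n)
    (G : Matrix (Fin (2 ^ c)) (Fin (2 ^ c)) ℂ) :
    Matrix (Fin (2 ^ n)) (Fin (2 ^ n)) ℂ :=
  Matrix.reindex (finCongr (by subst h; rw [pow_add, pow_add, mul_assoc]))
    (finCongr (by subst h; rw [pow_add, pow_add, mul_assoc]))
    (kron' (1 : Matrix (Fin (2 ^ a)) (Fin (2 ^ a)) ℂ)
      (kron' G (1 : Matrix (Fin (2 ^ b)) (Fin (2 ^ b)) ℂ)))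

/-- Generators of the Clifford group: ω•I, and H, S, CZ applied to (adjacent) qubits. -/
def CliffordGenSet (n : ℕ) : Set (Matrix (Fin (2 ^ n)) (Fin (2 ^ n)) ℂ) :=
  {ω • 1} ∪
  {M | ∃ a b, ∃ h : a + 1 + b = n, M = embed a 1 b n h gH ∨ M = embed a 1 b n h gS} ∪
  {M | ∃ a b, ∃ h : a + 2 + b = n, M = embed a 2 b n h gCZ}

/-- The Clifford group on n qubits, as a subgroup of `GL (2^n) ℂ`. -/
def CliffordGroup (n : ℕ) : Subgroup (GL (Fin (2 ^ n)) ℂ) :=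
  Subgroup.closure
    {u : GL (Fin (2 ^ n)) ℂ | (u : Matrix (Fin (2 ^ n)) (Fin (2 ^ n)) ℂ) ∈ CliffordGenSet n}

/-- The Pauli group on n qubits, as a subgroup of `GL (2^n) ℂ`.
    (Its underlying set of matrices is exactly `PauliSet n`.) -/
def PauliGroup (n : ℕ) : Subgroup (GL (Fin (2 ^ n)) ℂ) :=
  Subgroup.closure
    {u : GL (Fin (2 ^ n)) ℂ | (u : Matrix (Fin (2 ^ n)) (Fin (2 ^ n)) ℂ) ∈ PauliSet n}

/-- Z on the first qubit, identity elsewhere. -/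
def ZFirst (n : ℕ) : Matrix (Fin (2 ^ n)) (Fin (2 ^ n)) ℂ :=
  tensorPow n fun i => if i.val = 0 then PZ else 1

/-- Z on the last qubit, identity elsewhere. -/
def ZLast (n : ℕ) : Matrix (Fin (2 ^ n)) (Fin (2 ^ n)) ℂ :=
  tensorPow n fun i => if i.val = n - 1 then PZ else 1

/-- X on the last qubit, identity elsewhere. -/
def XLast (n : ℕ) : Matrix (Fin (2 ^ n)) (Fin (2 ^ n)) ℂ :=
  tensorPow n fun i => if i.val = n - 1 then PX else 1

/-! If `C` and `D` conjugate every Pauli operator in the same way, then `E = D⁻¹ C` commutes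
with all Pauli operators. These span all `2ⁿ × 2ⁿ` matrices, so `E = c • 1`. Every generator of
the Clifford group has entries in `ℚ(ω)` (note `√2 = ω + ω⁻¹`) and determinant an 8th root of
unity, so the same holds for `E`: thus `c ∈ ℚ(ω)` and `c ^ (8 * 2ⁿ) = 1`. The roots of unity of
the 8th cyclotomic field are exactly the powers of `ω`, so `c = ωⁱ`. -/

open IntermediateField Matrix Submodule

lemma isPrimitiveRoot_omega : IsPrimitiveRoot ω 8 := by
  convert Complex.isPrimitiveRoot_exp 8 (by norm_num) using 1
  rw [ω]; congr 1; push_cast; ring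

lemma omega_sq : ω ^ 2 = Complex.I := by
  rw [ω, ← Complex.exp_nat_mul]
  convert Complex.exp_pi_div_two_mul_I using 2
  push_cast; ring

lemma omega_add_omega_inv : ω + ω⁻¹ = Real.sqrt 2 := by
  have h : Complex.I * Real.pi / 4 = ((Real.pi / 4 : ℝ) : ℂ) * Complex.I := by push_cast; ring
  rw [ω, ← Complex.exp_neg, h, ← neg_mul, ← Complex.two_cos, ← Complex.ofReal_cos,
    Real.cos_pi_div_four]
  push_cast; ring

instance : IsCyclotomicExtension {8} ℚ ℚ⟮ω⟯ := by
  change IsCyclotomicExtension {8} ℚ (ℚ⟮ω⟯).toSubalgebra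
  rw [adjoin_simple_toSubalgebra_of_isAlgebraic
    (isPrimitiveRoot_omega.isIntegral (by norm_num)).tower_top.isAlgebraic]
  exact isPrimitiveRoot_omega.adjoin_isCyclotomicExtension ℚ

instance : NumberField ℚ⟮ω⟯ := IsCyclotomicExtension.numberField {8} ℚ _

lemma torsionOrder_adjoin_omega : NumberField.Units.torsionOrder ℚ⟮ω⟯ = 8 := by
  rw [IsCyclotomicExtension.Rat.torsionOrder_eq (n := 8)]
  decide

lemma pow_eight_eq_one_of_mem_adjoin_omega {x : ℂ} (hx : x ∈ ℚ⟮ω⟯) {m : ℕ} (hm : 0 < m)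
    (h : x ^ m = 1) : x ^ 8 = 1 := by
  set y : ℚ⟮ω⟯ := ⟨x, hx⟩
  have hy : y ^ m = 1 := Subtype.ext h
  have : NeZero (orderOf y) := ⟨(isOfFinOrder_iff_pow_eq_one.mpr ⟨m, hm, hy⟩).orderOf_pos.ne'⟩
  have hd := NumberField.Units.dvd_torsionOrder_of_isPrimitiveRoot (IsPrimitiveRoot.orderOf y)
  rw [torsionOrder_adjoin_omega] at hd
  exact congrArg Subtype.val (orderOf_dvd_iff_pow_eq_one.mp hd)

lemma I_mem_adjoin_omega : Complex.I ∈ ℚ⟮ω⟯ := by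
  rw [← omega_sq]; exact pow_mem (mem_adjoin_simple_self ℚ ω) 2

lemma sqrt_two_mem_adjoin_omega : (Real.sqrt 2 : ℂ) ∈ ℚ⟮ω⟯ := by
  rw [← omega_add_omega_inv]
  exact add_mem (mem_adjoin_simple_self ℚ ω) (inv_mem (mem_adjoin_simple_self ℚ ω))

lemma mem_range_map_subtype_of_forall_mem {n L : Type*} [Fintype n] [DecidableEq n] [Field L]
    {F : Subfield L} (u : GL n L) (h : ∀ i j, u i j ∈ F) :
    u ∈ (GeneralLinearGroup.map F.subtype).range := by
  let A : Matrix n n F := .of fun i j => ⟨u i j, h i j⟩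
  have hA : A.map F.subtype = u := rfl
  have hdet : A.det ≠ 0 := by
    intro h0
    apply (GeneralLinearGroup.det u).ne_zero
    rw [GeneralLinearGroup.val_det_apply, ← hA, ← RingHom.mapMatrix_apply, ← RingHom.map_det, h0,
      map_zero]
  exact ⟨GeneralLinearGroup.mkOfDetNeZero A hdet, Units.ext hA⟩

lemma mem_ker_det_pow {n R : Type*} [Fintype n] [DecidableEq n] [CommRing R] {k : ℕ}
    {u : GL n R} : u ∈ ((powMonoidHom k).comp GeneralLinearGroup.det).ker ↔
      (u : Matrix n n R).det ^ k = 1 := by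
  simp [MonoidHom.mem_ker, Units.ext_iff]

lemma commute_inv_mul_of_conj_eq {M : Type*} [Monoid M] {a b : Mˣ} {p : M}
    (h : ↑a * p * ↑a⁻¹ = ↑b * p * ↑b⁻¹) : Commute (↑(b⁻¹ * a) : M) p :=
  calc (↑(b⁻¹ * a) : M) * p = ↑b⁻¹ * (↑a * p * ↑a⁻¹) * ↑a := by simp [mul_assoc]
    _ = ↑b⁻¹ * (↑b * p * ↑b⁻¹) * ↑a := by rw [h]
    _ = p * ↑(b⁻¹ * a) := by simp [mul_assoc]

lemma kron'_apply {m k : ℕ} (A : Matrix (Fin m) (Fin m) ℂ) (B : Matrix (Fin k) (Fin k) ℂ)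
    (x y : Fin (m * k)) :
    kron' A B x y = A (finProdFinEquiv.symm x).1 (finProdFinEquiv.symm y).1 *
      B (finProdFinEquiv.symm x).2 (finProdFinEquiv.symm y).2 :=
  rfl

lemma kron'_single_single {m k : ℕ} (i j : Fin m) (i' j' : Fin k) (a b : ℂ) :
    kron' (single i j a) (single i' j' b) =
      single (finProdFinEquiv (i, i')) (finProdFinEquiv (j, j')) (a * b) := by
  simp [kron', single_kronecker_single]

lemma det_kron' {m k : ℕ} (A : Matrix (Fin m) (Fin m) ℂ) (B : Matrix (Fin k) (Fin k) ℂ) :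
    (kron' A B).det = A.det ^ k * B.det ^ m := by
  rw [kron', det_reindex_self, det_kronecker, Fintype.card_fin, Fintype.card_fin]

lemma embed_apply_mem {S : Type*} [SetLike S ℂ] [SubsemiringClass S ℂ] {s : S}
    {a c b n : ℕ} (h : a + c + b = n) {G : Matrix (Fin (2 ^ c)) (Fin (2 ^ c)) ℂ}
    (hG : ∀ i j, G i j ∈ s) (x y : Fin (2 ^ n)) : embed a c b n h G x y ∈ s := by
  have one_mem' : ∀ {N : ℕ} (i j : Fin N), (1 : Matrix (Fin N) (Fin N) ℂ) i j ∈ s := by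
    intro N i j; rw [one_apply]; split_ifs <;> simp
  simp only [embed, reindex_apply, submatrix_apply, kron'_apply]
  exact mul_mem (one_mem' _ _) (mul_mem (hG _ _) (one_mem' _ _))

lemma det_embed {a c b n : ℕ} (h : a + c + b = n) (G : Matrix (Fin (2 ^ c)) (Fin (2 ^ c)) ℂ) :
    (embed a c b n h G).det = (G.det ^ 2 ^ b) ^ 2 ^ a := by
  simp [embed, det_kron']

lemma det_embed_pow_eight {a c b n : ℕ} (h : a + c + b = n)
    {G : Matrix (Fin (2 ^ c)) (Fin (2 ^ c)) ℂ} (hG : G.det ^ 8 = 1) :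
    (embed a c b n h G).det ^ 8 = 1 := by
  rw [det_embed, pow_right_comm, pow_right_comm _ (2 ^ b), hG, one_pow, one_pow]

lemma gH_apply_mem (i j : Fin 2) : gH i j ∈ ℚ⟮ω⟯ := by
  have := inv_mem sqrt_two_mem_adjoin_omega
  fin_cases i <;> fin_cases j <;> simp [gH, this]

lemma gS_apply_mem (i j : Fin 2) : gS i j ∈ ℚ⟮ω⟯ := by
  fin_cases i <;> fin_cases j <;> simp [gS, I_mem_adjoin_omega]

lemma gCZ_apply_mem (i j : Fin 4) : gCZ i j ∈ ℚ⟮ω⟯ := by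
  fin_cases i <;> fin_cases j <;> simp [gCZ]

lemma det_gH : gH.det = -1 := by
  have h2 : (Real.sqrt 2 : ℂ)⁻¹ ^ 2 = 2⁻¹ := by
    rw [inv_pow, ← Complex.ofReal_pow, Real.sq_sqrt zero_le_two]; norm_num
  rw [gH, det_smul, Fintype.card_fin, h2, det_fin_two_of]
  norm_num

lemma det_gS : gS.det = Complex.I := by
  simp [gS, det_fin_two_of]

lemma det_gCZ : gCZ.det = -1 := by
  simp [gCZ, det_succ_row_zero, Fin.sum_univ_succ]

lemma generator_apply_mem {n : ℕ} {M : Matrix (Fin (2 ^ n)) (Fin (2 ^ n)) ℂ}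
    (hM : M ∈ CliffordGenSet n) (i j : Fin (2 ^ n)) : M i j ∈ ℚ⟮ω⟯ := by
  rcases hM with (rfl | ⟨a, b, h, rfl | rfl⟩) | ⟨a, b, h, rfl⟩
  · rw [Matrix.smul_apply, smul_eq_mul, one_apply]
    split_ifs <;> simp [mem_adjoin_simple_self]
  · exact embed_apply_mem h gH_apply_mem i j
  · exact embed_apply_mem h gS_apply_mem i j
  · exact embed_apply_mem h gCZ_apply_mem i j

lemma det_generator_pow_eight {n : ℕ} {M : Matrix (Fin (2 ^ n)) (Fin (2 ^ n)) ℂ}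
    (hM : M ∈ CliffordGenSet n) : M.det ^ 8 = 1 := by
  have omega_pow_eight : ω ^ 8 = 1 := isPrimitiveRoot_omega.pow_eq_one
  rcases hM with (rfl | ⟨a, b, h, rfl | rfl⟩) | ⟨a, b, h, rfl⟩
  · rw [det_smul, det_one, mul_one, Fintype.card_fin, pow_right_comm, omega_pow_eight, one_pow]
  · exact det_embed_pow_eight h (by rw [det_gH]; norm_num : gH.det ^ 8 = 1)
  · exact det_embed_pow_eight h
      (by rw [det_gS, ← omega_sq, ← pow_mul, pow_mul', omega_pow_eight, one_pow])
  · exact det_embed_pow_eight h (by rw [det_gCZ]; norm_num : gCZ.det ^ 8 = 1)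

lemma cliffordGroup_le_range_map (n : ℕ) :
    CliffordGroup n ≤ (GeneralLinearGroup.map (ℚ⟮ω⟯).toSubfield.subtype).range :=
  (Subgroup.closure_le _).mpr fun u hu =>
    mem_range_map_subtype_of_forall_mem u (generator_apply_mem hu)

lemma cliffordGroup_le_ker_det_pow_eight (n : ℕ) :
    CliffordGroup n ≤ ((powMonoidHom 8).comp GeneralLinearGroup.det).ker :=
  (Subgroup.closure_le _).mpr fun _ hu => mem_ker_det_pow.mpr (det_generator_pow_eight hu)

lemma pow_eight_eq_one_of_scalar_mem_cliffordGroup {n : ℕ} {u : GL (Fin (2 ^ n)) ℂ}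
    (hu : u ∈ CliffordGroup n) {c : ℂ}
    (hc : scalar _ c = (u : Matrix (Fin (2 ^ n)) (Fin (2 ^ n)) ℂ)) :
    c ^ 8 = 1 := by
  obtain ⟨A, hA⟩ := cliffordGroup_le_range_map n hu
  have hcK : c ∈ ℚ⟮ω⟯ := by
    let i : Fin (2 ^ n) := ⟨0, by positivity⟩
    have := congrArg (fun v : GL (Fin (2 ^ n)) ℂ => v i i) hA
    simp only [GeneralLinearGroup.map_apply, ← hc, scalar_apply, diagonal_apply_eq] at this
    exact this ▸ (A i i).2
  have hdet := mem_ker_det_pow.mp (cliffordGroup_le_ker_det_pow_eight n hu)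
  rw [← hc, scalar_apply, det_diagonal, Finset.prod_const, Finset.card_univ, Fintype.card_fin,
    ← pow_mul] at hdet
  exact pow_eight_eq_one_of_mem_adjoin_omega hcK (by positivity) hdet

lemma span_image2_kron'_eq_top {m k : ℕ} {s : Set (Matrix (Fin m) (Fin m) ℂ)}
    {t : Set (Matrix (Fin k) (Fin k) ℂ)} (hs : span ℂ s = ⊤) (ht : span ℂ t = ⊤) :
    span ℂ (Set.image2 kron' s t) = ⊤ := by
  let f : Matrix (Fin m) (Fin m) ℂ →ₗ[ℂ] Matrix (Fin k) (Fin k) ℂ →ₗ[ℂ]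
      Matrix (Fin (m * k)) (Fin (m * k)) ℂ := kroneckerBilinear.compr₂
    (reindexLinearEquiv ℂ ℂ finProdFinEquiv finProdFinEquiv).toLinearMap
  have hf : Set.image2 kron' s t = Set.image2 (fun A B => f A B) s t := rfl
  rw [hf, ← map₂_span_span, hs, ht, eq_top_iff]
  rintro M -
  rw [matrix_eq_sum_single M]
  refine sum_mem fun x _ => sum_mem fun y _ => ?_
  obtain ⟨⟨i, i'⟩, rfl⟩ := finProdFinEquiv.surjective x
  obtain ⟨⟨j, j'⟩, rfl⟩ := finProdFinEquiv.surjective y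
  rw [← mul_one (M _ _), ← kron'_single_single]
  exact apply_mem_map₂ f mem_top mem_top

def tensorPowSet (S : Set (Matrix (Fin 2) (Fin 2) ℂ)) (n : ℕ) :
    Set (Matrix (Fin (2 ^ n)) (Fin (2 ^ n)) ℂ) :=
  {M | ∃ P : Fin n → Matrix (Fin 2) (Fin 2) ℂ, (∀ i, P i ∈ S) ∧ M = tensorPow n P}

lemma span_tensorPowSet_eq_top {S : Set (Matrix (Fin 2) (Fin 2) ℂ)} (hS : span ℂ S = ⊤) :
    ∀ n, span ℂ (tensorPowSet S n) = ⊤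
  | 0 => by
    rw [eq_top_iff]
    rintro M -
    have hM : M = M 0 0 • (1 : Matrix (Fin (2 ^ 0)) (Fin (2 ^ 0)) ℂ) := by
      have h0 : ∀ i : Fin (2 ^ 0), i = 0 := fun i => Fin.ext (by omega)
      ext i j; simp [h0 i, h0 j]
    rw [hM]
    exact smul_mem _ _ (subset_span ⟨Fin.elim0, fun i => i.elim0, rfl⟩)
  | n + 1 => by
    let e := reindexLinearEquiv ℂ ℂ (finCongr (pow_succ' 2 n).symm) (finCongr (pow_succ' 2 n).symm)
    have hsub : e '' Set.image2 kron' S (tensorPowSet S n) ⊆ tensorPowSet S (n + 1) := by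
      rintro - ⟨-, ⟨A, hA, -, ⟨P, hP, rfl⟩, rfl⟩, rfl⟩
      exact ⟨Fin.cons A P, Fin.cases hA hP, rfl⟩
    rw [eq_top_iff, ← LinearEquiv.range e, LinearMap.range_eq_map,
      ← span_image2_kron'_eq_top hS (span_tensorPowSet_eq_top hS n), map_span]
    exact span_mono hsub

lemma span_pauliMatrices : span ℂ {1, PX, PY, PZ} = ⊤ := by
  rw [eq_top_iff]
  rintro M -
  have hM : M = ((M 0 0 + M 1 1) / 2) • (1 : Matrix (Fin 2) (Fin 2) ℂ) + ((M 0 1 + M 1 0) / 2) • PX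
      + (Complex.I * (M 0 1 - M 1 0) / 2) • PY + ((M 0 0 - M 1 1) / 2) • PZ := by
    ext i j
    fin_cases i <;> fin_cases j <;> simp [PX, PY, PZ] <;> ring_nf <;> simp [Complex.I_sq] <;> ring
  rw [hM]
  refine add_mem (add_mem (add_mem ?_ ?_) ?_) ?_ <;> exact smul_mem _ _ (subset_span (by simp))

lemma span_pauliSet (n : ℕ) : span ℂ (PauliSet n) = ⊤ :=
  eq_top_iff.mpr <| (span_tensorPowSet_eq_top span_pauliMatrices n).ge.trans <|
    span_mono fun _ ⟨P, hP, hM⟩ => ⟨1, P, by simp, hP, by rw [hM, one_smul]⟩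

lemma mem_range_scalar_of_forall_commute {ι R : Type*} [Fintype ι] [DecidableEq ι] [CommRing R]
    {S : Set (Matrix ι ι R)} (hS : span R S = ⊤) {E : Matrix ι ι R}
    (h : ∀ P ∈ S, Commute E P) : E ∈ Set.range (scalar ι) := by
  have hspan : span R S ≤ Subalgebra.toSubmodule (Subalgebra.centralizer R {E}) :=
    span_le.mpr fun P hP => (Subalgebra.mem_centralizer_iff R).mpr fun _ hE => by
      rw [Set.mem_singleton_iff.mp hE]; exact h P hP
  refine mem_range_scalar_of_commute_single fun i j _ => ?_
  have := hspan (hS ▸ mem_top : single i j 1 ∈ span R S)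
  exact ((Subalgebra.mem_centralizer_iff R).mp this E rfl).symm

/-- Two Clifford operators acting identically on the Pauli group by
conjugation differ only by a global phase ωⁱ, 0 ≤ i < 8. -/
theorem clifford_same_action_phase (n : ℕ) (C D : GL (Fin (2 ^ n)) ℂ)
    (hC : C ∈ CliffordGroup n) (hD : D ∈ CliffordGroup n)
    (hact : ∀ P ∈ PauliSet n,
      (C : Matrix (Fin (2 ^ n)) (Fin (2 ^ n)) ℂ) * P *
        ((C⁻¹ : GL (Fin (2 ^ n)) ℂ) : Matrix (Fin (2 ^ n)) (Fin (2 ^ n)) ℂ)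
      = (D : Matrix (Fin (2 ^ n)) (Fin (2 ^ n)) ℂ) * P *
        ((D⁻¹ : GL (Fin (2 ^ n)) ℂ) : Matrix (Fin (2 ^ n)) (Fin (2 ^ n)) ℂ)) :
    ∃ i : ℕ, i < 8 ∧
      (C : Matrix (Fin (2 ^ n)) (Fin (2 ^ n)) ℂ)
        = ω ^ i • (D : Matrix (Fin (2 ^ n)) (Fin (2 ^ n)) ℂ) := by
  obtain ⟨c, hc⟩ := mem_range_scalar_of_forall_commute (span_pauliSet n) fun P hP =>
    commute_inv_mul_of_conj_eq (hact P hP)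
  obtain ⟨i, hi, rfl⟩ := isPrimitiveRoot_omega.eq_pow_of_pow_eq_one <|
    pow_eight_eq_one_of_scalar_mem_cliffordGroup (mul_mem (inv_mem hD) hC) hc
  refine ⟨i, hi, ?_⟩
  calc (C : Matrix (Fin (2 ^ n)) (Fin (2 ^ n)) ℂ) = ↑(D * (D⁻¹ * C)) := by rw [mul_inv_cancel_left]
    _ = ω ^ i • (D : Matrix (Fin (2 ^ n)) (Fin (2 ^ n)) ℂ) := by
      rw [Units.val_mul, ← hc, scalar_apply, ← smul_one_eq_diagonal, mul_smul_comm, mul_one]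
end
end

section
/- For every n ≥ 0, the scalar matrices contained in the Clifford group Clifford(n) are exactly the eight matrices ωᵏ·I for k = 0, 1, …, 7, where ω = e^{iπ/4}; that is, λ·I ∈ Clifford(n) if and only if λ = ωᵏ for some 0 ≤ k < 8. -/
open scoped Matrix Kronecker

noncomputable section

/-!
Every generator of the Clifford group is unitary and becomes a matrix over the Gaussian
integers `ℤ[i]` after multiplication by a power of `√2`; both properties survive products,
inverses (which are adjoints) and Kronecker products with identities. So if `λ • 1` is a
Clifford element, then `|λ| = 1` and `√2 ^ k * λ = p + q i` with `p, q ∈ ℤ` and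
`p ^ 2 + q ^ 2 = 2 ^ k`. Since `1 + i = √2 ω` is the prime of `ℤ[i]` above `2`, every such
`p + q i` equals `ω ^ m * √2 ^ k`, hence `λ = ω ^ m`.
-/

open Matrix Complex
open scoped ComplexConjugate Kronecker

namespace CliffordScalars

def gaussianIntegers : Subring ℂ := GaussianInt.toComplex.range

lemma mem_gaussianIntegers_iff {z : ℂ} : z ∈ gaussianIntegers ↔ ∃ p q : ℤ, z = p + q * I := by
  constructor
  · rintro ⟨x, rfl⟩
    exact ⟨x.re, x.im, GaussianInt.toComplex_def x⟩
  · rintro ⟨p, q, rfl⟩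
    exact ⟨⟨p, q⟩, GaussianInt.toComplex_def' p q⟩

lemma I_mem_gaussianIntegers : I ∈ gaussianIntegers :=
  mem_gaussianIntegers_iff.2 ⟨0, 1, by simp⟩

lemma conj_mem_gaussianIntegers {z : ℂ} (hz : z ∈ gaussianIntegers) :
    conj z ∈ gaussianIntegers := by
  obtain ⟨x, rfl⟩ := hz
  exact ⟨star x, GaussianInt.toComplex_star x⟩

lemma one_apply_mem_gaussianIntegers {n : Type*} [DecidableEq n] (i j : n) :
    (1 : Matrix n n ℂ) i j ∈ gaussianIntegers := by
  rw [one_apply]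
  split_ifs <;> simp

section Unitary

variable {α l m : Type*} [CommRing α] [StarRing α]
  [Fintype l] [DecidableEq l] [Fintype m] [DecidableEq m]

lemma kronecker_mem_unitaryGroup {A : Matrix l l α} {B : Matrix m m α}
    (hA : A ∈ unitaryGroup l α) (hB : B ∈ unitaryGroup m α) :
    A ⊗ₖ B ∈ unitaryGroup (l × m) α := by
  rw [mem_unitaryGroup_iff] at *
  rw [star_eq_conjTranspose, conjTranspose_kronecker, ← mul_kronecker_mul,
    ← star_eq_conjTranspose, ← star_eq_conjTranspose, hA, hB, one_kronecker_one]

lemma reindex_mem_unitaryGroup (e : l ≃ m) {A : Matrix l l α} (hA : A ∈ unitaryGroup l α) :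
    reindex e e A ∈ unitaryGroup m α := by
  rw [mem_unitaryGroup_iff] at *
  rw [star_eq_conjTranspose, reindex_apply, conjTranspose_submatrix, submatrix_mul_equiv,
    ← star_eq_conjTranspose, hA, submatrix_one_equiv]

end Unitary

def IsDyadicGaussian {m n : Type*} (M : Matrix m n ℂ) : Prop :=
  ∃ k : ℕ, ∀ i j, (√2 : ℂ) ^ k * M i j ∈ gaussianIntegers

namespace IsDyadicGaussian

variable {l m n l' m' : Type*}

lemma of_forall_mem {M : Matrix m n ℂ} (hM : ∀ i j, M i j ∈ gaussianIntegers) :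
    IsDyadicGaussian M :=
  ⟨0, by simpa using hM⟩

lemma one [DecidableEq n] : IsDyadicGaussian (1 : Matrix n n ℂ) :=
  of_forall_mem one_apply_mem_gaussianIntegers

lemma mul [Fintype m] {A : Matrix l m ℂ} {B : Matrix m n ℂ}
    (hA : IsDyadicGaussian A) (hB : IsDyadicGaussian B) : IsDyadicGaussian (A * B) := by
  obtain ⟨k, hk⟩ := hA
  obtain ⟨k', hk'⟩ := hB
  refine ⟨k + k', fun i j => ?_⟩
  rw [mul_apply, Finset.mul_sum]
  refine Subring.sum_mem _ fun c _ => ?_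
  convert Subring.mul_mem _ (hk i c) (hk' c j) using 1
  ring

lemma conjTranspose {A : Matrix m n ℂ} (hA : IsDyadicGaussian A) : IsDyadicGaussian Aᴴ := by
  obtain ⟨k, hk⟩ := hA
  refine ⟨k, fun i j => ?_⟩
  simpa [conjTranspose_apply] using conj_mem_gaussianIntegers (hk j i)

lemma kronecker {A : Matrix l m ℂ} {B : Matrix l' m' ℂ}
    (hA : IsDyadicGaussian A) (hB : IsDyadicGaussian B) : IsDyadicGaussian (A ⊗ₖ B) := by
  obtain ⟨k, hk⟩ := hA
  obtain ⟨k', hk'⟩ := hB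
  refine ⟨k + k', fun ⟨i, i'⟩ ⟨j, j'⟩ => ?_⟩
  convert Subring.mul_mem _ (hk i j) (hk' i' j') using 1
  rw [kronecker_apply]
  ring

lemma submatrix {A : Matrix m n ℂ} (hA : IsDyadicGaussian A) (r : l → m) (c : l' → n) :
    IsDyadicGaussian (A.submatrix r c) :=
  let ⟨k, hk⟩ := hA
  ⟨k, fun i j => hk (r i) (c j)⟩

end IsDyadicGaussian

section Embedding

variable {a b c n : ℕ} (h : a + c + b = n) {G : Matrix (Fin (2 ^ c)) (Fin (2 ^ c)) ℂ}

lemma kron'_mem_unitaryGroup {p q : ℕ} {A : Matrix (Fin p) (Fin p) ℂ}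
    {B : Matrix (Fin q) (Fin q) ℂ} (hA : A ∈ unitaryGroup (Fin p) ℂ)
    (hB : B ∈ unitaryGroup (Fin q) ℂ) : kron' A B ∈ unitaryGroup (Fin (p * q)) ℂ :=
  reindex_mem_unitaryGroup _ (kronecker_mem_unitaryGroup hA hB)

lemma IsDyadicGaussian.kron' {p q : ℕ} {A : Matrix (Fin p) (Fin p) ℂ}
    {B : Matrix (Fin q) (Fin q) ℂ} (hA : IsDyadicGaussian A) (hB : IsDyadicGaussian B) :
    IsDyadicGaussian (_root_.kron' A B) :=
  (hA.kronecker hB).submatrix _ _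

lemma embed_mem_unitaryGroup (hG : G ∈ unitaryGroup _ ℂ) :
    embed a c b n h G ∈ unitaryGroup (Fin (2 ^ n)) ℂ :=
  reindex_mem_unitaryGroup _ <|
    kron'_mem_unitaryGroup (one_mem _) (kron'_mem_unitaryGroup hG (one_mem _))

lemma IsDyadicGaussian.embed (hG : IsDyadicGaussian G) :
    IsDyadicGaussian (_root_.embed a c b n h G) :=
  (IsDyadicGaussian.one.kron' (hG.kron' IsDyadicGaussian.one)).submatrix _ _

end Embedding

def dyadicUnitaryGroup (ι : Type*) [Fintype ι] [DecidableEq ι] : Subgroup (GL ι ℂ) where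
  carrier := {u | (u : Matrix ι ι ℂ) ∈ unitaryGroup ι ℂ ∧ IsDyadicGaussian (u : Matrix ι ι ℂ)}
  mul_mem' := fun ⟨hu, hu'⟩ ⟨hv, hv'⟩ => ⟨Submonoid.mul_mem _ hu hv, hu'.mul hv'⟩
  one_mem' := ⟨Submonoid.one_mem _, IsDyadicGaussian.one⟩
  inv_mem' := by
    rintro u ⟨hu, hu'⟩
    have hinv : ((u⁻¹ : GL ι ℂ) : Matrix ι ι ℂ) = star (u : Matrix ι ι ℂ) :=
      Units.inv_eq_of_mul_eq_one_right (mem_unitaryGroup_iff.1 hu)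
    rw [Set.mem_ofPred_eq, hinv]
    exact ⟨Unitary.star_mem hu, hu'.conjTranspose⟩

lemma mem_dyadicUnitaryGroup_iff {ι : Type*} [Fintype ι] [DecidableEq ι] {u : GL ι ℂ} :
    u ∈ dyadicUnitaryGroup ι ↔
      (u : Matrix ι ι ℂ) ∈ unitaryGroup ι ℂ ∧ IsDyadicGaussian (u : Matrix ι ι ℂ) :=
  Iff.rfl

lemma sqrt_two_mul_sqrt_two : (√2 : ℂ) * √2 = 2 := by
  rw [← ofReal_mul, Real.mul_self_sqrt zero_le_two, ofReal_ofNat]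

lemma sqrt_two_mul_omega : (√2 : ℂ) * ω = 1 + I := by
  have h : I * (Real.pi : ℂ) / 4 = ((Real.pi / 4 : ℝ) : ℂ) * I := by push_cast; ring
  rw [ω, h, exp_mul_I, ← ofReal_cos, ← ofReal_sin, Real.cos_pi_div_four,
    Real.sin_pi_div_four]
  push_cast
  linear_combination (1 + I) / 2 * sqrt_two_mul_sqrt_two

lemma omega_ne_zero : ω ≠ 0 :=
  exp_ne_zero _

lemma omega_sq : ω ^ 2 = I := by
  linear_combination (1 / 2 : ℂ) * congrArg (· ^ 2) sqrt_two_mul_omega -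
    (1 / 2) * ω ^ 2 * sqrt_two_mul_sqrt_two + (1 / 2) * I_sq

lemma omega_pow_four : ω ^ 4 = -1 := by
  rw [show 4 = 2 * 2 by rfl, pow_mul, omega_sq, I_sq]

lemma omega_pow_eight : ω ^ 8 = 1 := by
  rw [show 8 = 4 * 2 by rfl, pow_mul, omega_pow_four, neg_one_sq]

lemma omega_mem_unitary : ω ∈ unitary ℂ := by
  rw [Unitary.mem_iff_star_mul_self, star_def, ← normSq_eq_conj_mul_self]
  have h := congrArg normSq sqrt_two_mul_omega
  rw [normSq_mul, normSq_ofReal, Real.mul_self_sqrt zero_le_two] at h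
  have h1I : normSq (1 + I) = 2 := by norm_num [normSq_apply]
  exact_mod_cast (by linarith : normSq ω = 1)

lemma omega_smul_one_mem_unitaryGroup {ι : Type*} [Fintype ι] [DecidableEq ι] :
    ω • (1 : Matrix ι ι ℂ) ∈ unitaryGroup ι ℂ :=
  Unitary.smul_mem_of_mem omega_mem_unitary (one_mem _)

lemma isDyadicGaussian_omega_smul_one {ι : Type*} [DecidableEq ι] :
    IsDyadicGaussian (ω • (1 : Matrix ι ι ℂ)) := by
  refine ⟨1, fun i j => ?_⟩
  rw [Matrix.smul_apply, smul_eq_mul, pow_one, ← mul_assoc, sqrt_two_mul_omega]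
  exact Subring.mul_mem _ (Subring.add_mem _ (Subring.one_mem _) I_mem_gaussianIntegers)
    (one_apply_mem_gaussianIntegers i j)

lemma gH_mem_unitaryGroup : gH ∈ unitaryGroup (Fin 2) ℂ := by
  rw [mem_unitaryGroup_iff]
  ext i j
  fin_cases i <;> fin_cases j <;>
    simp [gH, mul_apply, Fin.sum_univ_two, star_eq_conjTranspose, conjTranspose_apply,
      ← mul_inv, sqrt_two_mul_sqrt_two] <;> norm_num

lemma gS_mem_unitaryGroup : gS ∈ unitaryGroup (Fin 2) ℂ := by
  rw [mem_unitaryGroup_iff]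
  ext i j
  fin_cases i <;> fin_cases j <;>
    simp [gS, mul_apply, Fin.sum_univ_two, star_eq_conjTranspose, conjTranspose_apply]

lemma gCZ_mem_unitaryGroup : gCZ ∈ unitaryGroup (Fin 4) ℂ := by
  rw [mem_unitaryGroup_iff]
  ext i j
  fin_cases i <;> fin_cases j <;>
    simp [gCZ, mul_apply, Fin.sum_univ_four, star_eq_conjTranspose, conjTranspose_apply]

lemma isDyadicGaussian_gH : IsDyadicGaussian gH := by
  refine ⟨1, fun i j => ?_⟩
  fin_cases i <;> fin_cases j <;> simp [gH]

lemma isDyadicGaussian_gS : IsDyadicGaussian gS :=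
  .of_forall_mem fun i j => by fin_cases i <;> fin_cases j <;> simp [gS, I_mem_gaussianIntegers]

lemma isDyadicGaussian_gCZ : IsDyadicGaussian gCZ :=
  .of_forall_mem fun i j => by fin_cases i <;> fin_cases j <;> simp [gCZ]

lemma cliffordGroup_le_dyadicUnitaryGroup (n : ℕ) :
    CliffordGroup n ≤ dyadicUnitaryGroup (Fin (2 ^ n)) := by
  refine (Subgroup.closure_le _).2 ?_
  rintro u ((hu | ⟨a, b, h, hu | hu⟩) | ⟨a, b, h, hu⟩) <;>
    rw [SetLike.mem_coe, mem_dyadicUnitaryGroup_iff, hu]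
  · exact ⟨omega_smul_one_mem_unitaryGroup, isDyadicGaussian_omega_smul_one⟩
  · exact ⟨embed_mem_unitaryGroup h gH_mem_unitaryGroup, isDyadicGaussian_gH.embed h⟩
  · exact ⟨embed_mem_unitaryGroup h gS_mem_unitaryGroup, isDyadicGaussian_gS.embed h⟩
  · exact ⟨embed_mem_unitaryGroup h gCZ_mem_unitaryGroup, isDyadicGaussian_gCZ.embed h⟩

/-- Descent along `1 + i = √2 ω`: `p + q` is even, and `p + q = 2 t` gives
`p + q i = (1 + i) (t + (t - p) i)` with `t ^ 2 + (t - p) ^ 2 = 2 ^ (k - 1)`. -/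
lemma exists_omega_pow_of_sq_add_sq_eq_two_pow :
    ∀ {k : ℕ} {p q : ℤ}, p ^ 2 + q ^ 2 = 2 ^ k → ∃ m : ℕ, (p + q * I : ℂ) = ω ^ m * √2 ^ k
  | 0, p, q, h => by
    have hp : -1 ≤ p ∧ p ≤ 1 := by constructor <;> nlinarith [sq_nonneg q]
    have hq : -1 ≤ q ∧ q ≤ 1 := by constructor <;> nlinarith [sq_nonneg p]
    obtain ⟨hp₁, hp₂⟩ := hp
    obtain ⟨hq₁, hq₂⟩ := hq
    interval_cases p <;> interval_cases q <;> norm_num at h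
    exacts [⟨4, by simp [omega_pow_four]⟩,
      ⟨6, by simp [show ω ^ 6 = ω ^ 4 * ω ^ 2 by ring, omega_pow_four, omega_sq]⟩,
      ⟨2, by simp [omega_sq]⟩, ⟨0, by simp⟩]
  | k + 1, p, q, h => by
    have hpq : Even (p + q) := by
      have : Even (p ^ 2 + q ^ 2) := h ▸ ⟨2 ^ k, by ring⟩
      simpa [Int.even_add, parity_simps] using this
    obtain ⟨t, ht⟩ := hpq
    obtain ⟨m, hm⟩ := exists_omega_pow_of_sq_add_sq_eq_two_pow (k := k) (p := t) (q := t - p)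
      (mul_left_cancel₀ two_ne_zero (by linear_combination h - (2 * t - p + q) * ht))
    refine ⟨m + 1, ?_⟩
    have ht' : (p + q : ℂ) = t + t := by exact_mod_cast ht
    have hdecomp : (p + q * I : ℂ) = (1 + I) * (t + (t - p : ℤ) * I) := by
      push_cast
      linear_combination I * ht' + (p - t : ℂ) * I_sq
    rw [hdecomp, hm, ← sqrt_two_mul_omega]
    ring

lemma exists_eq_omega_pow_of_smul_one {ι : Type*} [Fintype ι] [DecidableEq ι] [Nonempty ι]
    {lam : ℂ} (hu : lam • (1 : Matrix ι ι ℂ) ∈ unitaryGroup ι ℂ)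
    (hd : IsDyadicGaussian (lam • (1 : Matrix ι ι ℂ))) : ∃ m : ℕ, lam = ω ^ m := by
  obtain ⟨i⟩ := ‹Nonempty ι›
  have hnorm : normSq lam = 1 := by
    have h := congrFun (congrFun (mem_unitaryGroup_iff.1 hu) i) i
    simp only [star_smul, RCLike.star_def, star_one, Algebra.mul_smul_comm, mul_one,
      Matrix.smul_apply, one_apply_eq, smul_eq_mul] at h
    exact_mod_cast normSq_eq_conj_mul_self.trans h
  obtain ⟨k, hk⟩ := hd
  obtain ⟨p, q, hpq⟩ := mem_gaussianIntegers_iff.1 (hk i i)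
  simp only [Matrix.smul_apply, one_apply_eq, smul_eq_mul, mul_one] at hpq
  have hsum : p ^ 2 + q ^ 2 = 2 ^ k := by
    have h := congrArg normSq hpq
    rw [← ofReal_intCast, ← ofReal_intCast, normSq_add_mul_I, normSq_mul, map_pow,
      normSq_ofReal, Real.mul_self_sqrt zero_le_two, hnorm, mul_one] at h
    exact_mod_cast h.symm
  obtain ⟨m, hm⟩ := exists_omega_pow_of_sq_add_sq_eq_two_pow hsum
  refine ⟨m, mul_left_cancel₀ (pow_ne_zero k (by simp) : (√2 : ℂ) ^ k ≠ 0) ?_⟩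
  rw [hpq, hm, mul_comm]

end CliffordScalars

open CliffordScalars in
/-- The scalar matrices in the Clifford group are exactly the eight
matrices ωᵏ·I, 0 ≤ k < 8, where ω = e^{iπ/4}. -/
theorem clifford_scalars (n : ℕ) (lam : ℂ) :
    (∃ u : GL (Fin (2 ^ n)) ℂ, u ∈ CliffordGroup n ∧
      (u : Matrix (Fin (2 ^ n)) (Fin (2 ^ n)) ℂ)
        = lam • (1 : Matrix (Fin (2 ^ n)) (Fin (2 ^ n)) ℂ))
    ↔ ∃ k : ℕ, k < 8 ∧ lam = ω ^ k := by
  constructor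
  · rintro ⟨u, hu, hlam⟩
    obtain ⟨hunitary, hdyadic⟩ := cliffordGroup_le_dyadicUnitaryGroup n hu
    rw [hlam] at hunitary hdyadic
    obtain ⟨m, rfl⟩ := exists_eq_omega_pow_of_smul_one hunitary hdyadic
    exact ⟨m % 8, Nat.mod_lt _ (by norm_num), pow_eq_pow_mod m omega_pow_eight⟩
  · rintro ⟨k, -, rfl⟩
    let w : GL (Fin (2 ^ n)) ℂ :=
      ⟨ω • 1, ω⁻¹ • 1, by simp [smul_smul, omega_ne_zero], by simp [smul_smul, omega_ne_zero]⟩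
    have hw : w ∈ CliffordGroup n := Subgroup.subset_closure (Or.inl (Or.inl rfl))
    exact ⟨w ^ k, pow_mem hw k, by rw [Units.val_pow_eq_pow_val, smul_pow, one_pow]⟩
end
end
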